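/- In a twisted homotopical category, a commutative square in comon with horizontal maps f: C → C' and g: D → D' and vertical maps β: C → D and β': C' → D' that are weak equivalences induces a weak equivalence of Borel kernels C ∖̃ C' → D ∖̃ D'. (Here the Borel kernel of a comonoid map g: C' → C is C ∖̃ C' = C' □_C 𝓟C.) -/

import Mathlib

/-!
Statement 0 (Lemma 1.10(1) of Farjoun–Hess, "Normal and conormal maps in homotopy theory").

In a twisted homotopical category, for every morphism `f : A ⟶ A'` of monoids there is a
weak equivalence of biprincipal bundles from
`(Ω B̄A' → B̄A' ∖̃ B̄A → B̄A)` to `(A' → A' ⫽ A → B̄A)`: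
the left vertical map is the counit `v_{A'} : Ω B̄ A' → A'` (a weak equivalence), the middle
vertical map `B̄A' ∖̃ B̄A → A' ⫽ A` is a weak equivalence, and the right vertical map is the
identity of `B̄A`.

We model a twisted homotopical category as a homotopical category `(M, w)` (weak equivalences
contain identities and satisfy two-out-of-six) together with full subcategories `Mon` of
augmented monoids and `Comon` of coaugmented comonoids (given abstractly, with underlying-object
functors into `M`), a cobar/bar adjunction `Ω ⊣ B̄`, and, for every classifying (comonoid) map
`g : C ⟶ B̄ A`, the total object `Tot g` of the corresponding classifiable biprincipal bundle
`A ⟶ Tot g ⟶ C`, with pushforwards along monoid maps and pullbacks along comonoid maps.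
The classifying bundle of `A` is `ζ(A) = Tot (𝟙 (B̄ A))`, the classifying bundle of `C` is
`ξ(C) = Tot (u_C)` where `u` is the unit of the adjunction.  The Borel quotient of
`f : A ⟶ A'` is the total object of the bundle classified by `B̄ f`, and the Borel kernel
of `g : C' ⟶ C` is the total object of the bundle classified by `g ≫ u_C`.
-/

open CategoryTheory

universe v v₁ v₂ u u₁ u₂

/-- A twisted homotopical category (interface form). -/
structure TwistedHomotopicalCategory (M : Type u) [Category.{v} M]
    (Mon : Type u₁) [Category.{v₁} Mon] (Comon : Type u₂) [Category.{v₂} Comon] where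
  /-- the weak equivalences of `M` -/
  w : MorphismProperty M
  /-- weak equivalences contain all identities -/
  w_id : ∀ X : M, w (𝟙 X)
  /-- the two-out-of-six property -/
  w_two_out_of_six : ∀ {X Y Z T : M} (r : X ⟶ Y) (s : Y ⟶ Z) (t : Z ⟶ T),
    w (r ≫ s) → w (s ≫ t) → w r ∧ w s ∧ w t ∧ w (r ≫ s ≫ t)
  /-- underlying object in `M` of a monoid -/
  monU : Mon ⥤ M
  /-- underlying object in `M` of a comonoid -/
  comonU : Comon ⥤ M
  /-- the cobar construction -/
  Om : Comon ⥤ Mon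
  /-- the bar construction -/
  Bar : Mon ⥤ Comon
  /-- the cobar/bar adjunction -/
  adj : Om ⊣ Bar
  /-- the monoidal unit -/
  unit : M
  /-- the unit of an (augmented) monoid -/
  monUnit : ∀ A : Mon, unit ⟶ monU.obj A
  /-- the augmentation of an (augmented) monoid -/
  monAug : ∀ A : Mon, monU.obj A ⟶ unit
  /-- the counit of a (coaugmented) comonoid -/
  comonCounit : ∀ C : Comon, comonU.obj C ⟶ unit
  /-- the coaugmentation of a (coaugmented) comonoid -/
  comonCoaug : ∀ C : Comon, unit ⟶ comonU.obj C
  /-- total object of the classifiable biprincipal bundle with fibre monoid `A`, base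
  comonoid `C`, classified by `g : C ⟶ B̄ A`. -/
  Tot : ∀ {C : Comon} {A : Mon}, (C ⟶ Bar.obj A) → M
  /-- inclusion of the fibre monoid into the total object (a map of right `A`-modules) -/
  totI : ∀ {C : Comon} {A : Mon} (g : C ⟶ Bar.obj A), monU.obj A ⟶ Tot g
  /-- projection of the total object onto the base (a map of left `C`-comodules) -/
  totP : ∀ {C : Comon} {A : Mon} (g : C ⟶ Bar.obj A), Tot g ⟶ comonU.obj C
  /-- pushforward of a classifiable biprincipal bundle along a monoid map:
  `f_* (Tot g) = Tot (g ≫ B̄ f)`, with its canonical comparison map. -/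
  push : ∀ {C : Comon} {A A' : Mon} (g : C ⟶ Bar.obj A) (f : A ⟶ A'),
    Tot g ⟶ Tot (g ≫ Bar.map f)
  push_i : ∀ {C : Comon} {A A' : Mon} (g : C ⟶ Bar.obj A) (f : A ⟶ A'),
    totI g ≫ push g f = monU.map f ≫ totI (g ≫ Bar.map f)
  push_p : ∀ {C : Comon} {A A' : Mon} (g : C ⟶ Bar.obj A) (f : A ⟶ A'),
    push g f ≫ totP (g ≫ Bar.map f) = totP g
  /-- pullback of a classifiable biprincipal bundle along a comonoid map:
  `h^* (Tot g) = Tot (h ≫ g)`, with its canonical comparison map. -/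
  pull : ∀ {C' C : Comon} {A : Mon} (h : C' ⟶ C) (g : C ⟶ Bar.obj A),
    Tot (h ≫ g) ⟶ Tot g
  pull_i : ∀ {C' C : Comon} {A : Mon} (h : C' ⟶ C) (g : C ⟶ Bar.obj A),
    totI (h ≫ g) ≫ pull h g = totI g
  pull_p : ∀ {C' C : Comon} {A : Mon} (h : C' ⟶ C) (g : C ⟶ Bar.obj A),
    pull h g ≫ totP g = totP (h ≫ g) ≫ comonU.map h
  /-- axiom (1): the unit of the cobar/bar adjunction is a weak equivalence -/
  unit_w : ∀ C : Comon, w (comonU.map (adj.unit.app C))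
  /-- axiom (1): the counit of the cobar/bar adjunction is a weak equivalence -/
  counit_w : ∀ A : Mon, w (monU.map (adj.counit.app A))
  /-- axiom (2): `Ω` is homotopical -/
  Om_w : ∀ {C C' : Comon} (g : C ⟶ C'), w (comonU.map g) → w (monU.map (Om.map g))
  /-- axiom (2): `B̄` is homotopical -/
  Bar_w : ∀ {A A' : Mon} (f : A ⟶ A'), w (monU.map f) → w (comonU.map (Bar.map f))
  /-- axiom (3): `𝓔 A ⟶ B̄ A ⟶ I` is a weak equivalence, where `𝓔 A = Tot (𝟙 (B̄ A))` -/
  E_acyclic : ∀ A : Mon, w (totP (𝟙 (Bar.obj A)) ≫ comonCounit (Bar.obj A))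
  /-- axiom (4): `I ⟶ Ω C ⟶ 𝓟 C` is a weak equivalence, where `𝓟 C = Tot (u_C)` -/
  P_acyclic : ∀ C : Comon, w (monUnit (Om.obj C) ≫ totI (adj.unit.app C))
  /-- axiom (5): pushforward of a classifiable biprincipal bundle along a weak
  equivalence of monoids is a weak equivalence of bundles -/
  push_w : ∀ {C : Comon} {A A' : Mon} (g : C ⟶ Bar.obj A) (f : A ⟶ A'),
    w (monU.map f) → w (push g f)
  /-- axiom (6): pullback of a classifiable biprincipal bundle along a weak
  equivalence of comonoids is a weak equivalence of bundles -/
  pull_w : ∀ {C' C : Comon} {A : Mon} (h : C' ⟶ C) (g : C ⟶ Bar.obj A),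
    w (comonU.map h) → w (pull h g)

namespace TwistedHomotopicalCategory

variable {M : Type u} [Category.{v} M] {Mon : Type u₁} [Category.{v₁} Mon]
  {Comon : Type u₂} [Category.{v₂} Comon]
  (T : TwistedHomotopicalCategory M Mon Comon)

/-- The Borel (homotopy) quotient `A' ⫽ A` of a monoid map `f : A ⟶ A'`: the total object of
the biprincipal bundle classified by `B̄ f`. -/
def borelQuot {A A' : Mon} (f : A ⟶ A') : M := T.Tot (T.Bar.map f)

/-- `π_f : A' ⟶ A' ⫽ A` -/
def πmap {A A' : Mon} (f : A ⟶ A') : T.monU.obj A' ⟶ T.borelQuot f := T.totI (T.Bar.map f)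

/-- `δ_f : A' ⫽ A ⟶ B̄ A` -/
def δmap {A A' : Mon} (f : A ⟶ A') : T.borelQuot f ⟶ T.comonU.obj (T.Bar.obj A) :=
  T.totP (T.Bar.map f)

/-- The Borel (homotopy) kernel `C ∖̃ C'` of a comonoid map `g : C' ⟶ C`: the total object of
the biprincipal bundle classified by `g ≫ u_C`. -/
def borelKer {C' C : Comon} (g : C' ⟶ C) : M := T.Tot (g ≫ T.adj.unit.app C)

/-- `∂_g : Ω C ⟶ C ∖̃ C'` -/
def delMap {C' C : Comon} (g : C' ⟶ C) : T.monU.obj (T.Om.obj C) ⟶ T.borelKer g :=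
  T.totI (g ≫ T.adj.unit.app C)

/-- `ι_g : C ∖̃ C' ⟶ C'` -/
def ιmap {C' C : Comon} (g : C' ⟶ C) : T.borelKer g ⟶ T.comonU.obj C' :=
  T.totP (g ≫ T.adj.unit.app C)

end TwistedHomotopicalCategory

namespace TwistedHomotopicalCategory

variable {M : Type u} [Category.{v} M] {Mon : Type u₁} [Category.{v₁} Mon]
  {Comon : Type u₂} [Category.{v₂} Comon]
  (T : TwistedHomotopicalCategory M Mon Comon)

theorem w_comp {X Y Z : M} {r : X ⟶ Y} {s : Y ⟶ Z} (hr : T.w r) (hs : T.w s) :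
    T.w (r ≫ s) := by
  simpa using (T.w_two_out_of_six r (𝟙 Y) s (by simpa using hr) (by simpa using hs)).2.2.2

theorem w_eqToHom {X Y : M} (h : X = Y) : T.w (eqToHom h) := by
  subst h
  simpa using T.w_id X

theorem totI_comp_eqToHom {C : Comon} {A : Mon} {g₁ g₂ : C ⟶ T.Bar.obj A} (h : g₁ = g₂) :
    T.totI g₁ ≫ eqToHom (congrArg T.Tot h) = T.totI g₂ := by
  subst h
  simp

theorem eqToHom_comp_totP {C : Comon} {A : Mon} {g₁ g₂ : C ⟶ T.Bar.obj A} (h : g₁ = g₂) :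
    eqToHom (congrArg T.Tot h) ≫ T.totP g₂ = T.totP g₁ := by
  subst h
  simp

section TotMap

variable {C₁ C₂ : Comon} {A₁ A₂ : Mon} {g₁ : C₁ ⟶ T.Bar.obj A₁} {g₂ : C₂ ⟶ T.Bar.obj A₂}
  (φ : A₁ ⟶ A₂) (h : C₁ ⟶ C₂) (H : g₁ ≫ T.Bar.map φ = h ≫ g₂)

def totMap : T.Tot g₁ ⟶ T.Tot g₂ :=
  T.push g₁ φ ≫ eqToHom (congrArg T.Tot H) ≫ T.pull h g₂

theorem totI_comp_totMap : T.totI g₁ ≫ T.totMap φ h H = T.monU.map φ ≫ T.totI g₂ := by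
  rw [totMap, reassoc_of% T.push_i g₁ φ, reassoc_of% T.totI_comp_eqToHom H, T.pull_i]

theorem totMap_comp_totP : T.totMap φ h H ≫ T.totP g₂ = T.totP g₁ ≫ T.comonU.map h := by
  rw [totMap, Category.assoc, Category.assoc, T.pull_p, reassoc_of% T.eqToHom_comp_totP H,
    reassoc_of% T.push_p g₁ φ]

theorem w_totMap (hφ : T.w (T.monU.map φ)) (hh : T.w (T.comonU.map h)) :
    T.w (T.totMap φ h H) :=
  T.w_comp (T.push_w g₁ φ hφ) (T.w_comp (T.w_eqToHom _) (T.pull_w h g₂ hh))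

end TotMap

end TwistedHomotopicalCategory

open TwistedHomotopicalCategory

/-- (Remark 1.8 of the paper, dual form.)  In a twisted homotopical category,
a commutative square in `comon`, with horizontal maps `f : C ⟶ C'` and `g : D ⟶ D'` and with
vertical maps `β : C ⟶ D` and `β' : C' ⟶ D'` that are weak equivalences, induces a weak
equivalence of Borel kernels `C ∖̃ C' ⟶ D ∖̃ D'` (a map of bundles compatible with
`∂` and `ι`).  Here the Borel kernel of a comonoid map `g : C' ⟶ C` is
`C ∖̃ C' = C' □_C 𝓟C`. -/
theorem normal_conormal_stmt3
    {M : Type u} [Category.{v} M] {Mon : Type u₁} [Category.{v₁} Mon]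
    {Comon : Type u₂} [Category.{v₂} Comon]
    (T : TwistedHomotopicalCategory M Mon Comon)
    {C C' D D' : Comon} (f : C ⟶ C') (g : D ⟶ D') (β : C ⟶ D) (β' : C' ⟶ D')
    (sq : f ≫ β' = β ≫ g)
    (hβ : T.w (T.comonU.map β)) (hβ' : T.w (T.comonU.map β')) :
    ∃ m : T.borelKer f ⟶ T.borelKer g,
      T.w m ∧
      T.delMap f ≫ m = T.monU.map (T.Om.map β') ≫ T.delMap g ∧
      m ≫ T.ιmap g = T.ιmap f ≫ T.comonU.map β := by
  -- Naturality of the unit turns the square into one between the classifying maps, so the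
  -- kernel map is pushforward along `Ω β'` followed by pullback along `β`.
  have hsq : (f ≫ T.adj.unit.app C') ≫ T.Bar.map (T.Om.map β') =
      β ≫ g ≫ T.adj.unit.app D' := by
    rw [Category.assoc, ← Functor.comp_map, ← T.adj.unit.naturality β', Functor.id_map,
      reassoc_of% sq]
  exact ⟨T.totMap _ β hsq, T.w_totMap _ β hsq (T.Om_w β' hβ') hβ,
    T.totI_comp_totMap _ β hsq, T.totMap_comp_totP _ β hsq⟩
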